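/- Let Q be a seminormal quasi-crystal. The plactic congruence ≈ on F^⊗(Q) is a monoid congruence on the free monoid Q*: it is an equivalence relation on Q*, and for all u, v, u', v' ∈ Q*, if u ≈ v and u' ≈ v' then uu' ≈ vv'. -/

import Mathlib

/-! ## Root system setting -/

/-- The data of a root system `Φ` in a Euclidean space `V`, together with a choice of
simple roots `(α_i)_{i ∈ ι}` and a weight lattice `Λ`, with the integer-valued coroot
pairing `pair λ i = ⟨λ, α_i^∨⟩ = 2⟪λ, α_i⟫/⟪α_i, α_i⟫` on the weight lattice. -/
structure QCSetting (V : Type*) [NormedAddCommGroup V] [InnerProductSpace ℝ V]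
    (ι : Type*) where
  Φ : Set V
  finite : Φ.Finite
  nonempty : Φ.Nonempty
  zero_not_mem : (0 : V) ∉ Φ
  reflect_mem : ∀ a ∈ Φ, ∀ b ∈ Φ, b - (2 * (inner ℝ b a : ℝ) / (inner ℝ a a : ℝ)) • a ∈ Φ
  smul_root : ∀ a ∈ Φ, ∀ k : ℝ, k • a ∈ Φ → k = 1 ∨ k = -1
  simple : ι → V
  simple_mem : ∀ i, simple i ∈ Φ
  simple_indep : LinearIndependent ℝ simple
  Λ : AddSubgroup V
  lattice_spans : Submodule.span ℝ (Λ : Set V) = ⊤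
  root_mem_lattice : ∀ a ∈ Φ, a ∈ Λ
  pair : Λ → ι → ℤ
  pair_spec : ∀ (v : Λ) (i : ι),
    (pair v i : ℝ) = 2 * (inner ℝ (v : V) (simple i) : ℝ) / (inner ℝ (simple i) (simple i) : ℝ)

variable {V : Type*} [NormedAddCommGroup V] [InnerProductSpace ℝ V] {ι : Type*}

/-! ## Quasi-crystals -/

/-- The structure maps of a quasi-crystal of type `S` on an underlying set `Q`:
a weight map `wt` with values in the weight lattice, partial quasi-Kashiwara operators
`e i, f i : Q → Q ⊔ {⊥}` (realized as `Option`-valued maps, `none` playing the role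
of `⊥`), and maps `ε i, φ i : Q → ℤ ∪ {+∞}` (realized as `WithTop ℤ`). -/
structure QC (S : QCSetting V ι) (Q : Type*) where
  wt : Q → S.Λ
  e : ι → Q → Option Q
  f : ι → Q → Option Q
  ε : ι → Q → WithTop ℤ
  φ : ι → Q → WithTop ℤ

/-- `k`-fold iteration of a partial map `g : Q → Option Q` starting at `x`. -/
def optIter {Q : Type*} (g : Q → Option Q) (k : ℕ) (x : Q) : Option Q :=
  (fun o => o.bind g)^[k] (some x)

/-- The axioms of a seminormal quasi-crystal. -/
structure QC.IsSeminormal {S : QCSetting V ι} {Q : Type*} (𝒬 : QC S Q) : Prop where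
  phi_eq : ∀ i x, 𝒬.φ i x = 𝒬.ε i x + ((S.pair (𝒬.wt x) i : ℤ) : WithTop ℤ)
  wt_e : ∀ i x y, 𝒬.e i x = some y → (𝒬.wt y : V) = (𝒬.wt x : V) + S.simple i
  wt_f : ∀ i x y, 𝒬.f i x = some y → (𝒬.wt y : V) = (𝒬.wt x : V) - S.simple i
  e_iff_f : ∀ i x y, 𝒬.e i x = some y ↔ 𝒬.f i y = some x
  e_of_top : ∀ i x, 𝒬.ε i x = ⊤ → 𝒬.e i x = none
  f_of_top : ∀ i x, 𝒬.ε i x = ⊤ → 𝒬.f i x = none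
  eps_spec : ∀ i x, 𝒬.ε i x ≠ ⊤ → ∃ n : ℕ, 𝒬.ε i x = ((n : ℤ) : WithTop ℤ) ∧
    IsGreatest {k : ℕ | (optIter (𝒬.e i) k x).isSome} n
  phi_spec : ∀ i x, 𝒬.ε i x ≠ ⊤ → ∃ n : ℕ, 𝒬.φ i x = ((n : ℤ) : WithTop ℤ) ∧
    IsGreatest {k : ℕ | (optIter (𝒬.f i) k x).isSome} n

/-- A seminormal crystal is a seminormal quasi-crystal in which `ε i x ≠ +∞` always. -/
def QC.IsSeminormalCrystal {S : QCSetting V ι} {Q : Type*} (𝒬 : QC S Q) : Prop :=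
  𝒬.IsSeminormal ∧ ∀ i x, 𝒬.ε i x ≠ ⊤

/-! ## Tensor product -/

/-- The tensor product of two quasi-crystals of the same type. -/
noncomputable def QC.tensor {S : QCSetting V ι} {Q Q' : Type*} (𝒬 : QC S Q) (𝒬' : QC S Q') :
    QC S (Q × Q') where
  wt p := 𝒬.wt p.1 + 𝒬'.wt p.2
  ε i p := max (𝒬.ε i p.1) (𝒬'.ε i p.2 + ((-(S.pair (𝒬.wt p.1) i) : ℤ) : WithTop ℤ))
  φ i p := max (𝒬.φ i p.1 + ((S.pair (𝒬'.wt p.2) i : ℤ) : WithTop ℤ)) (𝒬'.φ i p.2)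
  e i p := if 𝒬'.ε i p.2 ≤ 𝒬.φ i p.1
    then (𝒬.e i p.1).map (fun y => (y, p.2))
    else (𝒬'.e i p.2).map (fun y => (p.1, y))
  f i p := if 𝒬'.ε i p.2 < 𝒬.φ i p.1
    then (𝒬.f i p.1).map (fun y => (y, p.2))
    else (𝒬'.f i p.2).map (fun y => (p.1, y))

/-! ## Quasi-tensor product -/

/-- The (inverse-free) quasi-tensor product of two quasi-crystals of the same type. -/
noncomputable def QC.qtensor {S : QCSetting V ι} {Q Q' : Type*} (𝒬 : QC S Q) (𝒬' : QC S Q') :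
    QC S (Q × Q') where
  wt p := 𝒬.wt p.1 + 𝒬'.wt p.2
  ε i p := if 0 < 𝒬.φ i p.1 ∧ 0 < 𝒬'.ε i p.2 then ⊤
    else max (𝒬.ε i p.1) (𝒬'.ε i p.2 + ((-(S.pair (𝒬.wt p.1) i) : ℤ) : WithTop ℤ))
  φ i p := if 0 < 𝒬.φ i p.1 ∧ 0 < 𝒬'.ε i p.2 then ⊤
    else max (𝒬.φ i p.1 + ((S.pair (𝒬'.wt p.2) i : ℤ) : WithTop ℤ)) (𝒬'.φ i p.2)
  e i p := if 0 < 𝒬.φ i p.1 ∧ 0 < 𝒬'.ε i p.2 then none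
    else if 𝒬'.ε i p.2 ≤ 𝒬.φ i p.1 then (𝒬.e i p.1).map (fun y => (y, p.2))
    else (𝒬'.e i p.2).map (fun y => (p.1, y))
  f i p := if 0 < 𝒬.φ i p.1 ∧ 0 < 𝒬'.ε i p.2 then none
    else if 𝒬'.ε i p.2 < 𝒬.φ i p.1 then (𝒬.f i p.1).map (fun y => (y, p.2))
    else (𝒬'.f i p.2).map (fun y => (p.1, y))

/-! ## Homomorphisms -/

/-- A quasi-crystal homomorphism `ψ : 𝒬 → 𝒬'`, i.e. a map `Q ⊔ {⊥} → Q' ⊔ {⊥}`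
(realized on `Option`s, `none` playing the role of `⊥`) compatible with the structure
maps in the appropriate sense. -/
structure QCHom {S : QCSetting V ι} {Q Q' : Type*} (𝒬 : QC S Q) (𝒬' : QC S Q') where
  toFun : Option Q → Option Q'
  map_none : toFun none = none
  wt_eq : ∀ x y, toFun (some x) = some y → 𝒬'.wt y = 𝒬.wt x
  eps_eq : ∀ i x y, toFun (some x) = some y → 𝒬'.ε i y = 𝒬.ε i x
  phi_eq : ∀ i x y, toFun (some x) = some y → 𝒬'.φ i y = 𝒬.φ i x
  comm_e : ∀ i x x' y y', 𝒬.e i x = some x' → toFun (some x) = some y →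
    toFun (some x') = some y' → 𝒬'.e i y = some y'
  comm_f : ∀ i x x' y y', 𝒬.f i x = some x' → toFun (some x) = some y →
    toFun (some x') = some y' → 𝒬'.f i y = some y'

/-! ## The free `⊗`-quasi-crystal monoid -/

/-- Weight of a word: the sum of the weights of its letters. -/
def freeWt {S : QCSetting V ι} {Q : Type*} (𝒬 : QC S Q) : List Q → S.Λ
  | [] => 0
  | x :: w => 𝒬.wt x + freeWt 𝒬 w

/-- The map `ε̈_i` of the free `⊗`-quasi-crystal monoid. -/
def freeEps {S : QCSetting V ι} {Q : Type*} (𝒬 : QC S Q) (i : ι) : List Q → WithTop ℤ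
  | [] => 0
  | x :: w => max (𝒬.ε i x) (freeEps 𝒬 i w + ((-(S.pair (𝒬.wt x) i) : ℤ) : WithTop ℤ))

/-- The map `φ̈_i` of the free `⊗`-quasi-crystal monoid. -/
def freePhi {S : QCSetting V ι} {Q : Type*} (𝒬 : QC S Q) (i : ι) : List Q → WithTop ℤ
  | [] => 0
  | x :: w => max (𝒬.φ i x + ((S.pair (freeWt 𝒬 w) i : ℤ) : WithTop ℤ)) (freePhi 𝒬 i w)

/-- The operator `ë_i` of the free `⊗`-quasi-crystal monoid. -/
noncomputable def freeE {S : QCSetting V ι} {Q : Type*} (𝒬 : QC S Q) (i : ι) : List Q → Option (List Q)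
  | [] => none
  | x :: w => if freeEps 𝒬 i w ≤ 𝒬.φ i x
      then (𝒬.e i x).map (· :: w)
      else (freeE 𝒬 i w).map (x :: ·)

/-- The operator `f̈_i` of the free `⊗`-quasi-crystal monoid. -/
noncomputable def freeF {S : QCSetting V ι} {Q : Type*} (𝒬 : QC S Q) (i : ι) : List Q → Option (List Q)
  | [] => none
  | x :: w => if freeEps 𝒬 i w < 𝒬.φ i x
      then (𝒬.f i x).map (· :: w)
      else (freeF 𝒬 i w).map (x :: ·)

/-- The quasi-crystal structure of the free `⊗`-quasi-crystal monoid `F^⊗(𝒬)`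
on the free monoid `Q*`. -/
noncomputable def freeTensorQC {S : QCSetting V ι} {Q : Type*} (𝒬 : QC S Q) : QC S (FreeMonoid Q) where
  wt w := freeWt 𝒬 (FreeMonoid.toList w)
  ε i w := freeEps 𝒬 i (FreeMonoid.toList w)
  φ i w := freePhi 𝒬 i (FreeMonoid.toList w)
  e i w := (freeE 𝒬 i (FreeMonoid.toList w)).map (fun l => FreeMonoid.ofList l)
  f i w := (freeF 𝒬 i (FreeMonoid.toList w)).map (fun l => FreeMonoid.ofList l)

/-! ## The free `⊗̈`-quasi-crystal monoid -/

/-- The map `ε̈_i` of the free `⊗̈`-quasi-crystal monoid. -/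
noncomputable def qfreeEps {S : QCSetting V ι} {Q : Type*} (𝒬 : QC S Q) (i : ι) : List Q → WithTop ℤ
  | [] => 0
  | x :: w => if 0 < 𝒬.φ i x ∧ 0 < qfreeEps 𝒬 i w then ⊤
      else max (𝒬.ε i x) (qfreeEps 𝒬 i w + ((-(S.pair (𝒬.wt x) i) : ℤ) : WithTop ℤ))

/-- The map `φ̈_i` of the free `⊗̈`-quasi-crystal monoid. -/
noncomputable def qfreePhi {S : QCSetting V ι} {Q : Type*} (𝒬 : QC S Q) (i : ι) : List Q → WithTop ℤ
  | [] => 0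
  | x :: w => if 0 < 𝒬.φ i x ∧ 0 < qfreeEps 𝒬 i w then ⊤
      else max (𝒬.φ i x + ((S.pair (freeWt 𝒬 w) i : ℤ) : WithTop ℤ)) (qfreePhi 𝒬 i w)

/-- The operator `ë_i` of the free `⊗̈`-quasi-crystal monoid. -/
noncomputable def qfreeE {S : QCSetting V ι} {Q : Type*} (𝒬 : QC S Q) (i : ι) : List Q → Option (List Q)
  | [] => none
  | x :: w => if 0 < 𝒬.φ i x ∧ 0 < qfreeEps 𝒬 i w then none
      else if qfreeEps 𝒬 i w ≤ 𝒬.φ i x then (𝒬.e i x).map (· :: w)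
      else (qfreeE 𝒬 i w).map (x :: ·)

/-- The operator `f̈_i` of the free `⊗̈`-quasi-crystal monoid. -/
noncomputable def qfreeF {S : QCSetting V ι} {Q : Type*} (𝒬 : QC S Q) (i : ι) : List Q → Option (List Q)
  | [] => none
  | x :: w => if 0 < 𝒬.φ i x ∧ 0 < qfreeEps 𝒬 i w then none
      else if qfreeEps 𝒬 i w < 𝒬.φ i x then (𝒬.f i x).map (· :: w)
      else (qfreeF 𝒬 i w).map (x :: ·)

/-- The quasi-crystal structure of the free `⊗̈`-quasi-crystal monoid `F^⊗̈(𝒬)`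
on the free monoid `Q*`. -/
noncomputable def freeQTensorQC {S : QCSetting V ι} {Q : Type*} (𝒬 : QC S Q) : QC S (FreeMonoid Q) where
  wt w := freeWt 𝒬 (FreeMonoid.toList w)
  ε i w := qfreeEps 𝒬 i (FreeMonoid.toList w)
  φ i w := qfreePhi 𝒬 i (FreeMonoid.toList w)
  e i w := (qfreeE 𝒬 i (FreeMonoid.toList w)).map (fun l => FreeMonoid.ofList l)
  f i w := (qfreeF 𝒬 i (FreeMonoid.toList w)).map (fun l => FreeMonoid.ofList l)

/-! ## Connected components, plactic and hypoplactic congruences -/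

/-- Two elements are connected in the quasi-crystal graph if they are related by the
reflexive-symmetric-transitive closure of the edge relation given by the
quasi-Kashiwara operators. -/
def QC.conn {S : QCSetting V ι} {Q : Type*} (𝒬 : QC S Q) : Q → Q → Prop :=
  Relation.EqvGen (fun x y => ∃ i, 𝒬.f i x = some y ∨ 𝒬.f i y = some x ∨
    𝒬.e i x = some y ∨ 𝒬.e i y = some x)

/-- The connected component `𝒬(x)` of a quasi-crystal `𝒬` containing `x`, as a
quasi-crystal on the subtype of elements connected with `x`. -/
def QC.compQC {S : QCSetting V ι} {Q : Type*} (𝒬 : QC S Q) (x : Q) :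
    QC S {y : Q // 𝒬.conn x y} where
  wt y := 𝒬.wt y.1
  ε i y := 𝒬.ε i y.1
  φ i y := 𝒬.φ i y.1
  e i y := (𝒬.e i y.1).pmap (fun z hz => (⟨z, hz⟩ : {y : Q // 𝒬.conn x y}))
    (fun z hz => Relation.EqvGen.trans _ _ _ y.2
      (Relation.EqvGen.rel _ _ ⟨i, Or.inr (Or.inr (Or.inl hz))⟩))
  f i y := (𝒬.f i y.1).pmap (fun z hz => (⟨z, hz⟩ : {y : Q // 𝒬.conn x y}))
    (fun z hz => Relation.EqvGen.trans _ _ _ y.2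
      (Relation.EqvGen.rel _ _ ⟨i, Or.inl hz⟩))

/-- The plactic congruence: `u ≈ v` iff there is a quasi-crystal isomorphism between the
connected components of `u` and `v` in `F^⊗(𝒬)` mapping `u` to `v`. -/
def placticRel {S : QCSetting V ι} {Q : Type*} (𝒬 : QC S Q)
    (u v : FreeMonoid Q) : Prop :=
  ∃ ψ : QCHom ((freeTensorQC 𝒬).compQC u) ((freeTensorQC 𝒬).compQC v),
    Function.Bijective ψ.toFun ∧
    ψ.toFun (some ⟨u, Relation.EqvGen.refl u⟩) = some ⟨v, Relation.EqvGen.refl v⟩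

/-- The hypoplactic congruence: `u ∼̈ v` iff there is a quasi-crystal isomorphism between
the connected components of `u` and `v` in `F^⊗̈(𝒬)` mapping `u` to `v`. -/
def hypoRel {S : QCSetting V ι} {Q : Type*} (𝒬 : QC S Q)
    (u v : FreeMonoid Q) : Prop :=
  ∃ ψ : QCHom ((freeQTensorQC 𝒬).compQC u) ((freeQTensorQC 𝒬).compQC v),
    Function.Bijective ψ.toFun ∧
    ψ.toFun (some ⟨u, Relation.EqvGen.refl u⟩) = some ⟨v, Relation.EqvGen.refl v⟩

/-! ## Quasi-crystal monoids -/

/-- A monoid is equidivisible if whenever `x₁y₁ = x₂y₂` one of the factorizations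
refines the other. -/
def Equidivisible (M : Type*) [Monoid M] : Prop :=
  ∀ x₁ x₂ y₁ y₂ : M, x₁ * y₁ = x₂ * y₂ →
    ∃ z : M, (x₂ = x₁ * z ∧ y₁ = z * y₂) ∨ (x₁ = x₂ * z ∧ y₂ = z * y₁)

/-- A `⊗`-quasi-crystal monoid: a seminormal quasi-crystal structure on a monoid whose
structure maps interact with the multiplication by the tensor-product rules. -/
structure IsTensorQCMon {S : QCSetting V ι} {M : Type*} [Monoid M] (𝒬 : QC S M) : Prop where
  seminormal : 𝒬.IsSeminormal
  wt_mul : ∀ x y, 𝒬.wt (x * y) = 𝒬.wt x + 𝒬.wt y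
  eps_mul : ∀ i x y, 𝒬.ε i (x * y) =
    max (𝒬.ε i x) (𝒬.ε i y + ((-(S.pair (𝒬.wt x) i) : ℤ) : WithTop ℤ))
  phi_mul : ∀ i x y, 𝒬.φ i (x * y) =
    max (𝒬.φ i x + ((S.pair (𝒬.wt y) i : ℤ) : WithTop ℤ)) (𝒬.φ i y)
  e_mul : ∀ i x y, 𝒬.e i (x * y) =
    if 𝒬.ε i y ≤ 𝒬.φ i x then (𝒬.e i x).map (· * y) else (𝒬.e i y).map (x * ·)
  f_mul : ∀ i x y, 𝒬.f i (x * y) =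
    if 𝒬.ε i y < 𝒬.φ i x then (𝒬.f i x).map (· * y) else (𝒬.f i y).map (x * ·)

/-- A `⊗̈`-quasi-crystal monoid: a seminormal quasi-crystal structure on a monoid such
that `x ⊗̈ y ↦ x·y` induces a quasi-crystal homomorphism `M ⊗̈ M → M`. -/
def IsQTensorQCMon {S : QCSetting V ι} {M : Type*} [Monoid M] (𝒬 : QC S M) : Prop :=
  𝒬.IsSeminormal ∧
  ∃ ψ : QCHom (𝒬.qtensor 𝒬) 𝒬, ψ.toFun = Option.map (fun p => p.1 * p.2)

/-! ## The bicyclic monoid with zero `B₀` and the monoid `Z₀` -/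

/-- The bicyclic monoid `⟨−, + | (+)(−) = ε⟩`: elements are normal forms `(−)^a(+)^b`. -/
structure Bic where
  neg : ℕ
  pos : ℕ
deriving DecidableEq

instance : Mul Bic :=
  ⟨fun x y => ⟨x.neg + (y.neg - x.pos), y.pos + (x.pos - y.neg)⟩⟩

theorem Bic.mul_def (x y : Bic) :
    x * y = ⟨x.neg + (y.neg - x.pos), y.pos + (x.pos - y.neg)⟩ := rfl

instance : One Bic := ⟨⟨0, 0⟩⟩

theorem Bic.one_def : (1 : Bic) = ⟨0, 0⟩ := rfl

instance : Monoid Bic where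
  mul_assoc x y z := by
    simp only [Bic.mul_def, Bic.mk.injEq]
    omega
  one_mul x := by
    simp only [Bic.one_def, Bic.mul_def]
    cases x
    simp only [Bic.mk.injEq]
    omega
  mul_one x := by
    simp only [Bic.one_def, Bic.mul_def]
    cases x
    simp only [Bic.mk.injEq]
    omega

/-- The bicyclic monoid with a zero element adjoined,
`B₀ = ⟨0, −, + | (+)(−) = ε, 0x = x0 = 0⟩`. -/
abbrev B0 : Type := WithZero Bic

/-- The monoid `Z₀ = ⟨0, −, + | (+)(−) = 0, 0x = x0 = 0⟩`: the nonzero elements are the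
normal forms `(−)^a(+)^b`. -/
inductive Z0 : Type
  | zero : Z0
  | word : ℕ → ℕ → Z0
deriving DecidableEq

instance : Mul Z0 :=
  ⟨fun x y => match x, y with
    | Z0.zero, _ => Z0.zero
    | _, Z0.zero => Z0.zero
    | Z0.word a b, Z0.word c d =>
        if 0 < b ∧ 0 < c then Z0.zero else Z0.word (a + c) (b + d)⟩

instance : One Z0 := ⟨Z0.word 0 0⟩

instance : Zero Z0 := ⟨Z0.zero⟩

theorem Z0.one_def : (1 : Z0) = Z0.word 0 0 := rfl
theorem Z0.zero_def : (0 : Z0) = Z0.zero := rfl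
theorem Z0.zero_mul' (x : Z0) : Z0.zero * x = Z0.zero := by cases x <;> rfl
theorem Z0.mul_zero' (x : Z0) : x * Z0.zero = Z0.zero := by cases x <;> rfl
theorem Z0.word_mul_word (a b c d : ℕ) :
    Z0.word a b * Z0.word c d =
      if 0 < b ∧ 0 < c then Z0.zero else Z0.word (a + c) (b + d) := rfl

instance : MonoidWithZero Z0 where
  mul_assoc x y z := by
    cases x <;> cases y <;> cases z <;>
      simp only [Z0.zero_mul', Z0.mul_zero', Z0.word_mul_word]
    · split_ifs <;> simp_all [Z0.zero_mul', Z0.mul_zero', Z0.word_mul_word] <;>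
        split_ifs <;> simp_all <;> omega
  one_mul x := by
    cases x
    · rfl
    · simp [Z0.one_def, Z0.word_mul_word]
  mul_one x := by
    cases x
    · rfl
    · simp [Z0.one_def, Z0.word_mul_word]
  zero_mul x := by cases x <;> rfl
  mul_zero x := by cases x <;> rfl

/-! ## Signature maps -/

/-- The `i`-signature map for the tensor product `⊗`:
`sgn_i^⊗(w) = 0` if `ε̈_i(w) = +∞`, and `(−)^{ε̈_i(w)}(+)^{φ̈_i(w)}` otherwise. -/
noncomputable def tsgn {V : Type*} [NormedAddCommGroup V] [InnerProductSpace ℝ V] {ι : Type*}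
    {S : QCSetting V ι} {Q : Type*} (𝒬 : QC S Q) (i : ι) (w : FreeMonoid Q) : B0 :=
  if freeEps 𝒬 i (FreeMonoid.toList w) = ⊤ then 0
  else ↑(Bic.mk ((freeEps 𝒬 i (FreeMonoid.toList w)).untopD 0).toNat
      ((freePhi 𝒬 i (FreeMonoid.toList w)).untopD 0).toNat)

/-- The `i`-signature map for the quasi-tensor product `⊗̈`:
`sgn_i^⊗̈(w) = 0` if `ε̈_i(w) = +∞`, and `(−)^{ε̈_i(w)}(+)^{φ̈_i(w)}` otherwise. -/
noncomputable def qsgn {V : Type*} [NormedAddCommGroup V] [InnerProductSpace ℝ V] {ι : Type*}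
    {S : QCSetting V ι} {Q : Type*} (𝒬 : QC S Q) (i : ι) (w : FreeMonoid Q) : Z0 :=
  if qfreeEps 𝒬 i (FreeMonoid.toList w) = ⊤ then 0
  else Z0.word ((qfreeEps 𝒬 i (FreeMonoid.toList w)).untopD 0).toNat
      ((qfreePhi 𝒬 i (FreeMonoid.toList w)).untopD 0).toNat

/-!
A bijective homomorphism between components of `F^⊗(Q)` is automatically strict, i.e. it commutes
with `ë_i` and `f̈_i` as partial maps: it preserves `ε̈_i` and `φ̈_i`, and these determine where
`ë_i` and `f̈_i` are defined. Strict isomorphisms of pointed components invert and compose, so `≈`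
is an equivalence.

For products, the rules defining `F^⊗(Q)` say that concatenation `F^⊗(Q) ⊗ F^⊗(Q) → F^⊗(Q)` is
strict. On `F^⊗(Q)(u) ⊗ F^⊗(Q)(u')` it is injective, because all words of a component have the
same length, and as `ë_i` and `f̈_i` are mutually inverse it maps the component of `(u, u')` onto
`F^⊗(Q)(uu')`. Given `ψ : u ≈ v` and `ψ' : u' ≈ v'`, the same holds for concatenation after
`ψ ⊗ ψ'`, which identifies that component with `F^⊗(Q)(vv')`.
-/

theorem add_coe_neg_le_iff {a b : WithTop ℤ} {c : ℤ} :
    a + ((-c : ℤ) : WithTop ℤ) ≤ b ↔ a ≤ b + c := by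
  rw [← WithTop.add_le_add_iff_right (WithTop.coe_ne_top (a := c)), add_assoc, ← WithTop.coe_add,
    neg_add_cancel, WithTop.coe_zero, add_zero]

theorem add_coe_neg_lt_iff {a b : WithTop ℤ} {c : ℤ} :
    a + ((-c : ℤ) : WithTop ℤ) < b ↔ a < b + c := by
  rw [← WithTop.add_lt_add_iff_right (WithTop.coe_ne_top (a := c)), add_assoc, ← WithTop.coe_add,
    neg_add_cancel, WithTop.coe_zero, add_zero]

theorem le_add_coe_neg_iff {a b : WithTop ℤ} {c : ℤ} :
    a ≤ b + ((-c : ℤ) : WithTop ℤ) ↔ a + c ≤ b := by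
  rw [← WithTop.add_le_add_iff_right (WithTop.coe_ne_top (a := c)), add_assoc (b := _),
    ← WithTop.coe_add, neg_add_cancel, WithTop.coe_zero, add_zero]

theorem lt_add_coe_neg_iff {a b : WithTop ℤ} {c : ℤ} :
    a < b + ((-c : ℤ) : WithTop ℤ) ↔ a + c < b := by
  rw [← WithTop.add_lt_add_iff_right (WithTop.coe_ne_top (a := c)), add_assoc (b := _),
    ← WithTop.coe_add, neg_add_cancel, WithTop.coe_zero, add_zero]

theorem lt_add_one_iff_le_of_ne_top {a b : WithTop ℤ} (hb : b ≠ ⊤) : a < b + 1 ↔ a ≤ b := by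
  lift b to ℤ using hb
  induction a using WithTop.recTopCoe with
  | top => simp [← WithTop.coe_one, ← WithTop.coe_add]
  | coe a => norm_cast; omega

namespace QCSetting

variable (S : QCSetting V ι)

theorem pair_add (v w : S.Λ) (i : ι) : S.pair (v + w) i = S.pair v i + S.pair w i := by
  have : (S.pair (v + w) i : ℝ) = S.pair v i + S.pair w i := by
    simp only [S.pair_spec, AddSubgroup.coe_add, inner_add_left]
    ring
  exact_mod_cast this

theorem pair_zero (i : ι) : S.pair 0 i = 0 := by
  simpa using S.pair_add 0 0 i

theorem pair_eq_add_two {v w : S.Λ} {i : ι} (hvw : (w : V) = v + S.simple i) :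
    S.pair w i = S.pair v i + 2 := by
  have hα : (inner ℝ (S.simple i) (S.simple i) : ℝ) ≠ 0 := by
    rw [Ne, inner_self_eq_zero]
    exact fun h0 => S.zero_not_mem (h0 ▸ S.simple_mem i)
  have : (S.pair w i : ℝ) = S.pair v i + 2 := by
    rw [S.pair_spec, S.pair_spec, hvw, inner_add_left]
    field_simp
  exact_mod_cast this

end QCSetting

section OptIter

variable {Q : Type*} {g : Q → Option Q} {x y : Q}

theorem optIter_succ (g : Q → Option Q) (k : ℕ) (x : Q) :
    optIter g (k + 1) x = (g x).bind (optIter g k) := by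
  show (fun o => o.bind g)^[k] (g x) = _
  cases g x with
  | none => exact Function.iterate_fixed (f := fun o : Option Q => o.bind g) rfl k
  | some y => rfl

theorem isGreatest_optIter_succ_iff (hxy : g x = some y) (n : ℕ) :
    IsGreatest {k | (optIter g k x).isSome} (n + 1) ↔
      IsGreatest {k | (optIter g k y).isSome} n := by
  have hshift : ∀ k, optIter g (k + 1) x = optIter g k y := fun k => by
    rw [optIter_succ, hxy]; rfl
  refine ⟨fun ⟨hn, hub⟩ => ⟨?_, fun k hk => ?_⟩, fun ⟨hn, hub⟩ => ⟨?_, fun k hk => ?_⟩⟩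
  · simpa [hshift] using hn
  · have := hub (show k + 1 ∈ _ by simpa [hshift] using hk)
    omega
  · simpa [hshift] using hn
  · cases k with
    | zero => omega
    | succ k => exact Nat.succ_le_succ (hub (by simpa [hshift] using hk))

theorem isSome_iff_pos_of_isGreatest {n : ℕ} (hn : IsGreatest {k | (optIter g k x).isSome} n) :
    (g x).isSome ↔ 0 < n := by
  cases hx : g x with
  | none =>
    obtain ⟨hmem, -⟩ := hn
    cases n with
    | zero => simp
    | succ n => simp [optIter_succ, hx] at hmem
  | some y =>
    simpa [Nat.one_le_iff_ne_zero, Nat.pos_iff_ne_zero] using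
      hn.2 (show 1 ∈ {k | (optIter g k x).isSome} by simp [hx, optIter])

end OptIter

theorem Relation.EqvGen.iff_of_rel {α : Type*} {r : α → α → Prop} {P : α → Prop}
    (hP : ∀ a b, r a b → (P a ↔ P b)) {a b : α} (hab : Relation.EqvGen r a b) : P a ↔ P b := by
  induction hab with
  | rel a b hab => exact hP a b hab
  | refl => rfl
  | symm _ _ _ ih => exact ih.symm
  | trans _ _ _ _ _ ih₁ ih₂ => exact ih₁.trans ih₂

section Morphisms

variable {S : QCSetting V ι} {A B C D : Type*} {𝒜 : QC S A} {ℬ : QC S B} {𝒞 : QC S C}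
  {𝒟 : QC S D}

def QC.Adj (𝒜 : QC S A) (x y : A) : Prop :=
  ∃ i, 𝒜.f i x = some y ∨ 𝒜.f i y = some x ∨ 𝒜.e i x = some y ∨ 𝒜.e i y = some x

theorem QC.Adj.symm {x y : A} : 𝒜.Adj x y → 𝒜.Adj y x := by
  rintro ⟨i, hxy⟩
  exact ⟨i, by tauto⟩

def QC.EFInverse (𝒜 : QC S A) : Prop :=
  ∀ i x y, 𝒜.e i x = some y ↔ 𝒜.f i y = some x

theorem QC.EFInverse.adj_iff (h𝒜 : 𝒜.EFInverse) {x y : A} :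
    𝒜.Adj x y ↔ ∃ i, 𝒜.f i x = some y ∨ 𝒜.e i x = some y := by
  refine exists_congr fun i => ?_
  rw [← h𝒜 i x y, ← h𝒜 i y x]
  tauto

structure QC.DomainsFromEpsPhi (𝒜 : QC S A) : Prop where
  e_isSome : ∀ i x, (𝒜.e i x).isSome ↔ 𝒜.ε i x ≠ ⊤ ∧ 0 < 𝒜.ε i x
  f_isSome : ∀ i x, (𝒜.f i x).isSome ↔ 𝒜.ε i x ≠ ⊤ ∧ 0 < 𝒜.φ i x

theorem QC.compQC_e_map_val (𝒜 : QC S A) (x : A) (i : ι) (y : {y // 𝒜.conn x y}) :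
    ((𝒜.compQC x).e i y).map Subtype.val = 𝒜.e i y.1 := by
  cases h : 𝒜.e i y.1 <;> simp [QC.compQC, h]

theorem QC.compQC_f_map_val (𝒜 : QC S A) (x : A) (i : ι) (y : {y // 𝒜.conn x y}) :
    ((𝒜.compQC x).f i y).map Subtype.val = 𝒜.f i y.1 := by
  cases h : 𝒜.f i y.1 <;> simp [QC.compQC, h]

theorem QC.DomainsFromEpsPhi.compQC (h𝒜 : 𝒜.DomainsFromEpsPhi) (x : A) :
    (𝒜.compQC x).DomainsFromEpsPhi where
  e_isSome i y := by
    rw [← Option.isSome_map (f := Subtype.val), 𝒜.compQC_e_map_val]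
    exact h𝒜.e_isSome i y.1
  f_isSome i y := by
    rw [← Option.isSome_map (f := Subtype.val), 𝒜.compQC_f_map_val]
    exact h𝒜.f_isSome i y.1

structure IsStrictMorphism (𝒜 : QC S A) (ℬ : QC S B) (m : A → B) : Prop where
  map_wt : ∀ x, ℬ.wt (m x) = 𝒜.wt x
  map_eps : ∀ i x, ℬ.ε i (m x) = 𝒜.ε i x
  map_phi : ∀ i x, ℬ.φ i (m x) = 𝒜.φ i x
  map_e : ∀ i x, ℬ.e i (m x) = (𝒜.e i x).map m
  map_f : ∀ i x, ℬ.f i (m x) = (𝒜.f i x).map m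

namespace IsStrictMorphism

theorem id (𝒜 : QC S A) : IsStrictMorphism 𝒜 𝒜 id where
  map_wt _ := rfl
  map_eps _ _ := rfl
  map_phi _ _ := rfl
  map_e _ _ := by simp
  map_f _ _ := by simp

theorem comp {m : B → C} {n : A → B} (hm : IsStrictMorphism ℬ 𝒞 m)
    (hn : IsStrictMorphism 𝒜 ℬ n) : IsStrictMorphism 𝒜 𝒞 (m ∘ n) where
  map_wt x := (hm.map_wt _).trans (hn.map_wt x)
  map_eps i x := (hm.map_eps i _).trans (hn.map_eps i x)
  map_phi i x := (hm.map_phi i _).trans (hn.map_phi i x)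
  map_e i x := by simp [hm.map_e, hn.map_e, Option.map_map]
  map_f i x := by simp [hm.map_f, hn.map_f, Option.map_map]

theorem symm {Ψ : A ≃ B} (hΨ : IsStrictMorphism 𝒜 ℬ Ψ) : IsStrictMorphism ℬ 𝒜 Ψ.symm where
  map_wt y := by simpa using (hΨ.map_wt (Ψ.symm y)).symm
  map_eps i y := by simpa using (hΨ.map_eps i (Ψ.symm y)).symm
  map_phi i y := by simpa using (hΨ.map_phi i (Ψ.symm y)).symm
  map_e i y := by
    conv_rhs => rw [← Ψ.apply_symm_apply y, hΨ.map_e, Option.map_map]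
    simp
  map_f i y := by
    conv_rhs => rw [← Ψ.apply_symm_apply y, hΨ.map_f, Option.map_map]
    simp

theorem prodMap {m : A → C} {n : B → D} (hm : IsStrictMorphism 𝒜 𝒞 m)
    (hn : IsStrictMorphism ℬ 𝒟 n) : IsStrictMorphism (𝒜.tensor ℬ) (𝒞.tensor 𝒟) (Prod.map m n) where
  map_wt p := by simp [QC.tensor, hm.map_wt, hn.map_wt]
  map_eps i p := by simp [QC.tensor, hm.map_eps, hn.map_eps, hm.map_wt]
  map_phi i p := by simp [QC.tensor, hm.map_phi, hn.map_phi, hn.map_wt]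
  map_e i p := by
    simp only [QC.tensor, Prod.map_fst, Prod.map_snd, hm.map_e, hn.map_e, hm.map_phi, hn.map_eps]
    split_ifs <;> simp [Option.map_map, Function.comp_def]
  map_f i p := by
    simp only [QC.tensor, Prod.map_fst, Prod.map_snd, hm.map_f, hn.map_f, hm.map_phi, hn.map_eps]
    split_ifs <;> simp [Option.map_map, Function.comp_def]

theorem val (𝒜 : QC S A) (x : A) : IsStrictMorphism (𝒜.compQC x) 𝒜 Subtype.val where
  map_wt _ := rfl
  map_eps _ _ := rfl
  map_phi _ _ := rfl
  map_e i y := (𝒜.compQC_e_map_val x i y).symm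
  map_f i y := (𝒜.compQC_f_map_val x i y).symm

theorem restrict {m : A → B} (hm : IsStrictMorphism 𝒜 ℬ m) {x : A} {y : B}
    (n : {a // 𝒜.conn x a} → {b // ℬ.conn y b}) (hn : ∀ a, (n a).1 = m a.1) :
    IsStrictMorphism (𝒜.compQC x) (ℬ.compQC y) n where
  map_wt a := by simpa [QC.compQC, hn] using hm.map_wt a.1
  map_eps i a := by simpa [QC.compQC, hn] using hm.map_eps i a.1
  map_phi i a := by simpa [QC.compQC, hn] using hm.map_phi i a.1
  map_e i a := by
    apply Option.map_injective Subtype.val_injective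
    rw [QC.compQC_e_map_val, hn, hm.map_e, Option.map_map, ← 𝒜.compQC_e_map_val x i a,
      Option.map_map]
    simp only [Function.comp_def, hn]
  map_f i a := by
    apply Option.map_injective Subtype.val_injective
    rw [QC.compQC_f_map_val, hn, hm.map_f, Option.map_map, ← 𝒜.compQC_f_map_val x i a,
      Option.map_map]
    simp only [Function.comp_def, hn]

theorem adj {m : A → B} (hm : IsStrictMorphism 𝒜 ℬ m) {x y : A} (hxy : 𝒜.Adj x y) :
    ℬ.Adj (m x) (m y) := by
  obtain ⟨i, hxy⟩ := hxy
  refine ⟨i, ?_⟩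
  simp only [hm.map_e, hm.map_f]
  rcases hxy with h | h | h | h <;> simp [h]

theorem conn {m : A → B} (hm : IsStrictMorphism 𝒜 ℬ m) {x y : A} (hxy : 𝒜.conn x y) :
    ℬ.conn (m x) (m y) := by
  induction hxy with
  | rel _ _ hab => exact .rel _ _ (hm.adj hab)
  | refl => exact .refl _
  | symm _ _ _ ih => exact .symm _ _ ih
  | trans _ _ _ _ _ ih₁ ih₂ => exact .trans _ _ _ ih₁ ih₂

/-- Edges leaving the image of `m` lift along `m`; `hℬ` turns the edges entering it into leaving
ones. -/
theorem exists_conn_eq {m : A → B} (hm : IsStrictMorphism 𝒜 ℬ m) (hℬ : ℬ.EFInverse) {x : A}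
    {z : B} (hz : ℬ.conn (m x) z) : ∃ y, 𝒜.conn x y ∧ m y = z := by
  have hstep : ∀ z z', ℬ.Adj z z' → (∃ y, 𝒜.conn x y ∧ m y = z) → ∃ y, 𝒜.conn x y ∧ m y = z' := by
    rintro z z' hzz' ⟨y, hy, rfl⟩
    obtain ⟨i, hf | he⟩ := hℬ.adj_iff.1 hzz'
    · rw [hm.map_f] at hf
      obtain ⟨y', hy', rfl⟩ := Option.map_eq_some_iff.1 hf
      exact ⟨y', .trans _ _ _ hy (.rel _ _ ⟨i, .inl hy'⟩), rfl⟩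
    · rw [hm.map_e] at he
      obtain ⟨y', hy', rfl⟩ := Option.map_eq_some_iff.1 he
      exact ⟨y', .trans _ _ _ hy (.rel _ _ ⟨i, .inr (.inr (.inl hy'))⟩), rfl⟩
  exact (Relation.EqvGen.iff_of_rel (fun a b hab => ⟨hstep a b hab, hstep b a hab.symm⟩) hz).1
    ⟨x, .refl x, rfl⟩

def toQCHom {m : A → B} (hm : IsStrictMorphism 𝒜 ℬ m) : QCHom 𝒜 ℬ where
  toFun := Option.map m
  map_none := rfl
  wt_eq x y hxy := by cases Option.some.inj hxy; exact hm.map_wt x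
  eps_eq i x y hxy := by cases Option.some.inj hxy; exact hm.map_eps i x
  phi_eq i x y hxy := by cases Option.some.inj hxy; exact hm.map_phi i x
  comm_e i x x' y y' he hy hy' := by
    cases Option.some.inj hy; cases Option.some.inj hy'; simp [hm.map_e, he]
  comm_f i x x' y y' hf hy hy' := by
    cases Option.some.inj hy; cases Option.some.inj hy'; simp [hm.map_f, hf]

end IsStrictMorphism

theorem QCHom.removeNone_apply (ψ : QCHom 𝒜 ℬ) (hψ : Function.Bijective ψ.toFun) (x : A) :
    some ((Equiv.ofBijective _ hψ).removeNone x) = ψ.toFun (some x) :=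
  Equiv.removeNone_some _ (Option.ne_none_iff_exists'.1 fun hx =>
    Option.some_ne_none x (hψ.1 (hx.trans ψ.map_none.symm)))

theorem QCHom.isStrictMorphism_removeNone (ψ : QCHom 𝒜 ℬ) (hψ : Function.Bijective ψ.toFun)
    (h𝒜 : 𝒜.DomainsFromEpsPhi) (hℬ : ℬ.DomainsFromEpsPhi) :
    IsStrictMorphism 𝒜 ℬ (Equiv.ofBijective _ hψ).removeNone := by
  set E := (Equiv.ofBijective _ hψ).removeNone
  have hE : ∀ x, ψ.toFun (some x) = some (E x) := fun x => (ψ.removeNone_apply hψ x).symm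
  refine ⟨fun x => ψ.wt_eq x _ (hE x), fun i x => ψ.eps_eq i x _ (hE x),
    fun i x => ψ.phi_eq i x _ (hE x), fun i x => ?_, fun i x => ?_⟩
  · cases hx : 𝒜.e i x with
    | some x' => exact ψ.comm_e i x x' _ _ hx (hE x) (hE x')
    | none =>
      rw [Option.map_none, ← Option.not_isSome_iff_eq_none, hℬ.e_isSome, ψ.eps_eq i x _ (hE x),
        ← h𝒜.e_isSome, hx]
      simp
  · cases hx : 𝒜.f i x with
    | some x' => exact ψ.comm_f i x x' _ _ hx (hE x) (hE x')
    | none =>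
      rw [Option.map_none, ← Option.not_isSome_iff_eq_none, hℬ.f_isSome, ψ.eps_eq i x _ (hE x),
        ψ.phi_eq i x _ (hE x), ← h𝒜.f_isSome, hx]
      simp

def ComponentIso (𝒜 : QC S A) (ℬ : QC S B) (x : A) (y : B) : Prop :=
  ∃ Ψ : {a // 𝒜.conn x a} ≃ {b // ℬ.conn y b},
    IsStrictMorphism (𝒜.compQC x) (ℬ.compQC y) Ψ ∧ Ψ ⟨x, .refl x⟩ = ⟨y, .refl y⟩

namespace ComponentIso

theorem refl (𝒜 : QC S A) (x : A) : ComponentIso 𝒜 𝒜 x x :=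
  ⟨Equiv.refl _, IsStrictMorphism.id _, rfl⟩

theorem symm {x : A} {y : B} : ComponentIso 𝒜 ℬ x y → ComponentIso ℬ 𝒜 y x := by
  rintro ⟨Ψ, hΨ, hxy⟩
  exact ⟨Ψ.symm, hΨ.symm, Ψ.symm_apply_eq.2 hxy.symm⟩

theorem trans {x : A} {y : B} {z : C} :
    ComponentIso 𝒜 ℬ x y → ComponentIso ℬ 𝒞 y z → ComponentIso 𝒜 𝒞 x z := by
  rintro ⟨Ψ, hΨ, hxy⟩ ⟨Φ, hΦ, hyz⟩
  exact ⟨Ψ.trans Φ, hΦ.comp hΨ, by simp [hxy, hyz]⟩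

end ComponentIso

theorem IsStrictMorphism.componentIso {m : A → B} (hm : IsStrictMorphism 𝒜 ℬ m)
    (hinj : Function.Injective m) (hℬ : ℬ.EFInverse) (x : A) : ComponentIso 𝒜 ℬ x (m x) := by
  let n : {a // 𝒜.conn x a} → {b // ℬ.conn (m x) b} := fun a => ⟨m a, hm.conn a.2⟩
  have hn : Function.Bijective n := by
    refine ⟨fun a b hab => Subtype.ext (hinj (congrArg Subtype.val hab)), fun b => ?_⟩
    obtain ⟨a, ha, hab⟩ := hm.exists_conn_eq hℬ b.2
    exact ⟨⟨a, ha⟩, Subtype.ext hab⟩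
  exact ⟨Equiv.ofBijective n hn, hm.restrict _ fun _ => rfl, rfl⟩

theorem componentIso_iff_exists_qcHom (h𝒜 : 𝒜.DomainsFromEpsPhi) (hℬ : ℬ.DomainsFromEpsPhi)
    (x : A) (y : B) :
    ComponentIso 𝒜 ℬ x y ↔ ∃ ψ : QCHom (𝒜.compQC x) (ℬ.compQC y),
      Function.Bijective ψ.toFun ∧ ψ.toFun (some ⟨x, .refl x⟩) = some ⟨y, .refl y⟩ := by
  constructor
  · rintro ⟨Ψ, hΨ, hxy⟩
    exact ⟨hΨ.toQCHom, (Equiv.optionCongr Ψ).bijective, congrArg some hxy⟩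
  · rintro ⟨ψ, hψ, hxy⟩
    refine ⟨_, ψ.isStrictMorphism_removeNone hψ (h𝒜.compQC x) (hℬ.compQC y), ?_⟩
    exact Option.some.inj ((ψ.removeNone_apply hψ _).trans hxy)

end Morphisms

namespace QC.IsSeminormal

variable {S : QCSetting V ι} {Q : Type*} {𝒬 : QC S Q} {i : ι} {x y : Q}

theorem phi_eq_top_iff (h : 𝒬.IsSeminormal) : 𝒬.φ i x = ⊤ ↔ 𝒬.ε i x = ⊤ := by
  simp [h.phi_eq]

theorem eps_nonneg (h : 𝒬.IsSeminormal) : 0 ≤ 𝒬.ε i x := by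
  by_cases hx : 𝒬.ε i x = ⊤
  · simp [hx]
  · obtain ⟨n, hn, -⟩ := h.eps_spec i x hx
    simp [hn]

theorem phi_nonneg (h : 𝒬.IsSeminormal) : 0 ≤ 𝒬.φ i x := by
  by_cases hx : 𝒬.ε i x = ⊤
  · simp [h.phi_eq_top_iff.2 hx]
  · obtain ⟨n, hn, -⟩ := h.phi_spec i x hx
    simp [hn]

theorem eps_ne_top_of_e (h : 𝒬.IsSeminormal) (he : 𝒬.e i x = some y) : 𝒬.ε i x ≠ ⊤ ∧ 𝒬.ε i y ≠ ⊤ :=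
  ⟨fun hx => by simp [h.e_of_top i x hx] at he,
    fun hy => by simpa [h.f_of_top i y hy] using (h.e_iff_f i x y).1 he⟩

theorem eps_eq_of_e (h : 𝒬.IsSeminormal) (he : 𝒬.e i x = some y) : 𝒬.ε i x = 𝒬.ε i y + 1 := by
  obtain ⟨hx, hy⟩ := h.eps_ne_top_of_e he
  obtain ⟨m, hm, hgm⟩ := h.eps_spec i x hx
  obtain ⟨n, hn, hgn⟩ := h.eps_spec i y hy
  rw [hm, hn, hgm.unique ((isGreatest_optIter_succ_iff he n).2 hgn)]
  rfl

theorem phi_eq_of_e (h : 𝒬.IsSeminormal) (he : 𝒬.e i x = some y) : 𝒬.φ i y = 𝒬.φ i x + 1 := by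
  obtain ⟨hx, hy⟩ := h.eps_ne_top_of_e he
  obtain ⟨m, hm, hgm⟩ := h.phi_spec i y hy
  obtain ⟨n, hn, hgn⟩ := h.phi_spec i x hx
  rw [hm, hn, hgm.unique ((isGreatest_optIter_succ_iff ((h.e_iff_f i x y).1 he) n).2 hgn)]
  rfl

theorem domainsFromEpsPhi (h : 𝒬.IsSeminormal) : 𝒬.DomainsFromEpsPhi where
  e_isSome i x := by
    by_cases hx : 𝒬.ε i x = ⊤
    · simp [hx, h.e_of_top i x hx]
    · obtain ⟨n, hn, hgn⟩ := h.eps_spec i x hx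
      simp [hn, isSome_iff_pos_of_isGreatest hgn]
  f_isSome i x := by
    by_cases hx : 𝒬.ε i x = ⊤
    · simp [hx, h.f_of_top i x hx]
    · obtain ⟨n, hn, hgn⟩ := h.phi_spec i x hx
      simp [hx, hn, isSome_iff_pos_of_isGreatest hgn]

end QC.IsSeminormal

section FreeWords

variable {S : QCSetting V ι} {Q : Type*} {𝒬 : QC S Q} {i : ι}

theorem freeWt_append (𝒬 : QC S Q) (a b : List Q) :
    freeWt 𝒬 (a ++ b) = freeWt 𝒬 a + freeWt 𝒬 b := by
  induction a with
  | nil => simp [freeWt]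
  | cons x a ih => simp [freeWt, ih, add_assoc]

theorem freeEps_nonneg (h : 𝒬.IsSeminormal) (w : List Q) : 0 ≤ freeEps 𝒬 i w := by
  cases w with
  | nil => exact le_rfl
  | cons x w => exact h.eps_nonneg.trans (le_max_left _ _)

theorem freePhi_nonneg (w : List Q) : 0 ≤ freePhi 𝒬 i w := by
  induction w with
  | nil => exact le_rfl
  | cons x w ih => exact ih.trans (le_max_right _ _)

theorem freePhi_eq_freeEps_add (h : 𝒬.IsSeminormal) (w : List Q) :
    freePhi 𝒬 i w = freeEps 𝒬 i w + S.pair (freeWt 𝒬 w) i := by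
  induction w with
  | nil => simp [freePhi, freeEps, freeWt, S.pair_zero]
  | cons x w ih =>
    simp only [freePhi, freeEps, freeWt, ih, h.phi_eq, S.pair_add, ← max_add_add_right, add_assoc,
      ← WithTop.coe_add, neg_add_cancel_left]

theorem freePhi_cons (h : 𝒬.IsSeminormal) (x : Q) (w : List Q) :
    freePhi 𝒬 i (x :: w) = max (𝒬.φ i x) (freeEps 𝒬 i w) + S.pair (freeWt 𝒬 w) i := by
  rw [freePhi, freePhi_eq_freeEps_add h, max_add_add_right]

theorem freeEps_append (h : 𝒬.IsSeminormal) (a b : List Q) :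
    freeEps 𝒬 i (a ++ b) =
      max (freeEps 𝒬 i a) (freeEps 𝒬 i b + ((-(S.pair (freeWt 𝒬 a) i) : ℤ) : WithTop ℤ)) := by
  induction a with
  | nil => simp [freeEps, freeWt, S.pair_zero, freeEps_nonneg h]
  | cons x a ih =>
    simp only [List.cons_append, freeEps, freeWt, ih, S.pair_add, ← max_add_add_right, max_assoc,
      add_assoc, ← WithTop.coe_add, neg_add_rev]

theorem freePhi_append (h : 𝒬.IsSeminormal) (a b : List Q) :
    freePhi 𝒬 i (a ++ b) =
      max (freePhi 𝒬 i a + ((S.pair (freeWt 𝒬 b) i : ℤ) : WithTop ℤ)) (freePhi 𝒬 i b) := by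
  simp only [freePhi_eq_freeEps_add h, freeEps_append h, freeWt_append, S.pair_add,
    ← max_add_add_right, add_assoc, ← WithTop.coe_add, neg_add_cancel_left]

theorem freeE_isSome_iff (h : 𝒬.IsSeminormal) (w : List Q) :
    (freeE 𝒬 i w).isSome ↔ freeEps 𝒬 i w ≠ ⊤ ∧ 0 < freeEps 𝒬 i w := by
  induction w with
  | nil => simp [freeE, freeEps]
  | cons x w ih =>
    simp only [freeE, freeEps]
    split_ifs with hc
    · rw [max_eq_left (add_coe_neg_le_iff.2 (h.phi_eq i x ▸ hc)), Option.isSome_map,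
        h.domainsFromEpsPhi.e_isSome]
    · have hlt : 𝒬.ε i x < freeEps 𝒬 i w + ((-(S.pair (𝒬.wt x) i) : ℤ) : WithTop ℤ) :=
        lt_add_coe_neg_iff.2 (h.phi_eq i x ▸ not_le.1 hc)
      have hpos : 0 < freeEps 𝒬 i w := h.phi_nonneg.trans_lt (not_le.1 hc)
      rw [max_eq_right hlt.le, Option.isSome_map, ih]
      simp only [Ne, WithTop.add_eq_top, WithTop.coe_ne_top, or_false, hpos,
        h.eps_nonneg.trans_lt hlt]

theorem freeF_isSome_iff (h : 𝒬.IsSeminormal) (w : List Q) :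
    (freeF 𝒬 i w).isSome ↔ freeEps 𝒬 i w ≠ ⊤ ∧ 0 < freePhi 𝒬 i w := by
  induction w with
  | nil => simp [freeF, freeEps, freePhi]
  | cons x w ih =>
    simp only [freeF, freeEps]
    rw [freePhi_cons h]
    split_ifs with hc
    · rw [max_eq_left (add_coe_neg_le_iff.2 (h.phi_eq i x ▸ hc.le)), Option.isSome_map,
        h.domainsFromEpsPhi.f_isSome, max_eq_left hc.le]
      have hφw : freePhi 𝒬 i w < 𝒬.φ i x + S.pair (freeWt 𝒬 w) i := by
        rw [freePhi_eq_freeEps_add h]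
        exact WithTop.add_lt_add_right WithTop.coe_ne_top hc
      simp only [(freeEps_nonneg h w).trans_lt hc, (freePhi_nonneg w).trans_lt hφw]
    · have hle : 𝒬.ε i x ≤ freeEps 𝒬 i w + ((-(S.pair (𝒬.wt x) i) : ℤ) : WithTop ℤ) :=
        le_add_coe_neg_iff.2 (h.phi_eq i x ▸ not_lt.1 hc)
      rw [max_eq_right hle, max_eq_right (not_lt.1 hc), Option.isSome_map, ih,
        freePhi_eq_freeEps_add h]
      simp


theorem freeE_append (h : 𝒬.IsSeminormal) (a b : List Q) :
    freeE 𝒬 i (a ++ b) = if freeEps 𝒬 i b ≤ freePhi 𝒬 i a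
      then (freeE 𝒬 i a).map (· ++ b) else (freeE 𝒬 i b).map (a ++ ·) := by
  induction a with
  | nil =>
    have hnone : freeEps 𝒬 i b ≤ 0 → freeE 𝒬 i b = none := fun hb => by
      rw [← Option.not_isSome_iff_eq_none, freeE_isSome_iff h]
      exact fun hpos => not_lt.2 hb hpos.2
    by_cases hb : freeEps 𝒬 i b ≤ 0 <;> simp [freeE, freePhi, hb, hnone]
  | cons x a ih =>
    simp only [List.cons_append, freeE, ih, freeEps_append h, freePhi_cons h,
      ← add_coe_neg_le_iff, freePhi_eq_freeEps_add h]
    split_ifs <;> first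
      | (exfalso; order)
      | simp [Option.map_map, Function.comp_def]

theorem freeF_append (h : 𝒬.IsSeminormal) (a b : List Q) :
    freeF 𝒬 i (a ++ b) = if freeEps 𝒬 i b < freePhi 𝒬 i a
      then (freeF 𝒬 i a).map (· ++ b) else (freeF 𝒬 i b).map (a ++ ·) := by
  induction a with
  | nil =>
    simp [freePhi, not_lt.2 (freeEps_nonneg h b)]
  | cons x a ih =>
    simp only [List.cons_append, freeF, ih, freeEps_append h, freePhi_cons h,
      ← add_coe_neg_lt_iff, freePhi_eq_freeEps_add h]
    split_ifs <;> first
      | (exfalso; order)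
      | simp [Option.map_map, Function.comp_def]


theorem freeEps_eq_of_freeE (h : 𝒬.IsSeminormal) {w w' : List Q} (he : freeE 𝒬 i w = some w') :
    freeEps 𝒬 i w = freeEps 𝒬 i w' + 1 := by
  induction w generalizing w' with
  | nil => simp [freeE] at he
  | cons x t ih =>
    simp only [freeE] at he
    split_ifs at he with hc
    · obtain ⟨y, hy, rfl⟩ := Option.map_eq_some_iff.1 he
      obtain ⟨hx, hy'⟩ := h.eps_ne_top_of_e hy
      have hεt : freeEps 𝒬 i t ≠ ⊤ := ne_top_of_le_ne_top (h.phi_eq_top_iff.not.2 hx) hc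
      lift freeEps 𝒬 i t to ℤ using hεt with b hb
      lift 𝒬.ε i y to ℤ using hy' with c hc'
      simp only [freeEps, h.phi_eq i x, h.eps_eq_of_e hy, ← hb, ← hc',
        S.pair_eq_add_two (h.wt_e i x y hy)] at hc ⊢
      norm_cast at hc ⊢
      omega
    · obtain ⟨t', ht', rfl⟩ := Option.map_eq_some_iff.1 he
      have hεt : freeEps 𝒬 i t ≠ ⊤ := ((freeE_isSome_iff h t).1 (by simp [ht'])).1
      have hεx : 𝒬.ε i x ≠ ⊤ :=
        h.phi_eq_top_iff.not.1 (ne_top_of_lt (not_le.1 hc))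
      simp only [freeEps, ih ht', h.phi_eq i x] at hc hεt ⊢
      lift freeEps 𝒬 i t' to ℤ using (by simpa using hεt) with b hb
      lift 𝒬.ε i x to ℤ using hεx with a ha
      norm_cast at hc ⊢
      omega

theorem freeF_of_freeE (h : 𝒬.IsSeminormal) {w w' : List Q} (he : freeE 𝒬 i w = some w') :
    freeF 𝒬 i w' = some w := by
  induction w generalizing w' with
  | nil => simp [freeE] at he
  | cons x t ih =>
    simp only [freeE] at he
    split_ifs at he with hc
    · obtain ⟨y, hy, rfl⟩ := Option.map_eq_some_iff.1 he
      have hφx : 𝒬.φ i x ≠ ⊤ := h.phi_eq_top_iff.not.2 (h.eps_ne_top_of_e hy).1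
      rw [freeF, if_pos (h.phi_eq_of_e hy ▸ (lt_add_one_iff_le_of_ne_top hφx).2 hc),
        (h.e_iff_f i x y).1 hy]
      rfl
    · obtain ⟨t', ht', rfl⟩ := Option.map_eq_some_iff.1 he
      have hεt : freeEps 𝒬 i t ≠ ⊤ := ((freeE_isSome_iff h t).1 (by simp [ht'])).1
      rw [freeEps_eq_of_freeE h ht'] at hc hεt
      rw [freeF, if_neg (not_lt.2 ((lt_add_one_iff_le_of_ne_top (by simpa using hεt)).1
        (not_le.1 hc))), ih ht']
      rfl

theorem freeE_of_freeF (h : 𝒬.IsSeminormal) {w w' : List Q} (hf : freeF 𝒬 i w = some w') :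
    freeE 𝒬 i w' = some w := by
  induction w generalizing w' with
  | nil => simp [freeF] at hf
  | cons x t ih =>
    simp only [freeF] at hf
    split_ifs at hf with hc
    · obtain ⟨y, hy, rfl⟩ := Option.map_eq_some_iff.1 hf
      have hyx := (h.e_iff_f i y x).2 hy
      have hφy : 𝒬.φ i y ≠ ⊤ := h.phi_eq_top_iff.not.2 (h.eps_ne_top_of_e hyx).1
      rw [h.phi_eq_of_e hyx, lt_add_one_iff_le_of_ne_top hφy] at hc
      rw [freeE, if_pos hc, hyx]
      rfl
    · obtain ⟨t', ht', rfl⟩ := Option.map_eq_some_iff.1 hf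
      have hεt : freeEps 𝒬 i t ≠ ⊤ := ((freeF_isSome_iff h t).1 (by simp [ht'])).1
      have hlt : ¬freeEps 𝒬 i t' ≤ 𝒬.φ i x := by
        rw [freeEps_eq_of_freeE h (ih ht')]
        exact fun hle => not_lt.2 (not_lt.1 hc)
          (lt_of_lt_of_le ((lt_add_one_iff_le_of_ne_top hεt).2 le_rfl) hle)
      rw [freeE, if_neg hlt, ih ht']
      rfl

theorem length_eq_of_freeE {w w' : List Q} (he : freeE 𝒬 i w = some w') :
    w'.length = w.length := by
  induction w generalizing w' with
  | nil => simp [freeE] at he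
  | cons x t ih =>
    simp only [freeE] at he
    split_ifs at he
    · obtain ⟨y, -, rfl⟩ := Option.map_eq_some_iff.1 he
      rfl
    · obtain ⟨t', ht', rfl⟩ := Option.map_eq_some_iff.1 he
      simp [ih ht']

end FreeWords

section FreeTensorQC

variable {S : QCSetting V ι} {Q : Type*} {𝒬 : QC S Q}

theorem freeTensorQC_e_eq_some_iff {i : ι} {w w' : FreeMonoid Q} :
    (freeTensorQC 𝒬).e i w = some w' ↔
      freeE 𝒬 i (FreeMonoid.toList w) = some (FreeMonoid.toList w') := by
  refine ⟨fun hw => ?_, fun hw => by simp [freeTensorQC, hw]⟩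
  obtain ⟨l, hl, rfl⟩ := Option.map_eq_some_iff.1 hw
  exact hl

theorem freeTensorQC_f_eq_some_iff {i : ι} {w w' : FreeMonoid Q} :
    (freeTensorQC 𝒬).f i w = some w' ↔
      freeF 𝒬 i (FreeMonoid.toList w) = some (FreeMonoid.toList w') := by
  refine ⟨fun hw => ?_, fun hw => by simp [freeTensorQC, hw]⟩
  obtain ⟨l, hl, rfl⟩ := Option.map_eq_some_iff.1 hw
  exact hl

theorem freeTensorQC_efInverse (h : 𝒬.IsSeminormal) : (freeTensorQC 𝒬).EFInverse := fun i _ _ => by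
  rw [freeTensorQC_e_eq_some_iff, freeTensorQC_f_eq_some_iff]
  exact ⟨freeF_of_freeE h, freeE_of_freeF h⟩

theorem freeTensorQC_domainsFromEpsPhi (h : 𝒬.IsSeminormal) :
    (freeTensorQC 𝒬).DomainsFromEpsPhi where
  e_isSome i w := by simp [freeTensorQC, freeE_isSome_iff h]
  f_isSome i w := by simp [freeTensorQC, freeF_isSome_iff h]

theorem isStrictMorphism_freeMul (h : 𝒬.IsSeminormal) :
    IsStrictMorphism ((freeTensorQC 𝒬).tensor (freeTensorQC 𝒬)) (freeTensorQC 𝒬)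
      (fun p => p.1 * p.2) where
  map_wt p := by simp [freeTensorQC, QC.tensor, freeWt_append]
  map_eps i p := by simp [freeTensorQC, QC.tensor, freeEps_append h]
  map_phi i p := by simp [freeTensorQC, QC.tensor, freePhi_append h]
  map_e i p := by
    simp only [freeTensorQC, QC.tensor, FreeMonoid.toList_mul, freeE_append h]
    split_ifs <;> simp [*, Option.map_map, Function.comp_def]
  map_f i p := by
    simp only [freeTensorQC, QC.tensor, FreeMonoid.toList_mul, freeF_append h]
    split_ifs <;> simp [*, Option.map_map, Function.comp_def]

theorem length_eq_of_conn (h : 𝒬.IsSeminormal) {u w : FreeMonoid Q}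
    (huw : (freeTensorQC 𝒬).conn u w) :
    (FreeMonoid.toList u).length = (FreeMonoid.toList w).length := by
  refine (Relation.EqvGen.iff_of_rel (P := fun w => _ = (FreeMonoid.toList w).length)
    (fun a b hab => ?_) huw).1 rfl
  obtain ⟨i, hf | he⟩ := (freeTensorQC_efInverse h).adj_iff.1 hab
  · rw [length_eq_of_freeE (freeE_of_freeF h (freeTensorQC_f_eq_some_iff.1 hf))]
  · rw [length_eq_of_freeE (freeTensorQC_e_eq_some_iff.1 he)]

theorem mul_injective_of_conn (h : 𝒬.IsSeminormal) (u u' : FreeMonoid Q) :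
    Function.Injective
      fun p : {a // (freeTensorQC 𝒬).conn u a} × {b // (freeTensorQC 𝒬).conn u' b} =>
        p.1.1 * p.2.1 := by
  rintro ⟨a, b⟩ ⟨c, d⟩ hab
  have hlen := (length_eq_of_conn h a.2).symm.trans (length_eq_of_conn h c.2)
  obtain ⟨hac, hbd⟩ := List.append_inj (congrArg FreeMonoid.toList hab) hlen
  exact Prod.ext (Subtype.ext (FreeMonoid.toList.injective hac))
    (Subtype.ext (FreeMonoid.toList.injective hbd))

end FreeTensorQC

section Plactic

variable {S : QCSetting V ι} {Q : Type*} {𝒬 : QC S Q}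

theorem placticRel_iff_componentIso (h : 𝒬.IsSeminormal) (u v : FreeMonoid Q) :
    placticRel 𝒬 u v ↔ ComponentIso (freeTensorQC 𝒬) (freeTensorQC 𝒬) u v :=
  (componentIso_iff_exists_qcHom (freeTensorQC_domainsFromEpsPhi h)
    (freeTensorQC_domainsFromEpsPhi h) u v).symm

theorem isStrictMorphism_mul_compQC (h : 𝒬.IsSeminormal) (u u' : FreeMonoid Q) :
    IsStrictMorphism (((freeTensorQC 𝒬).compQC u).tensor ((freeTensorQC 𝒬).compQC u'))
      (freeTensorQC 𝒬) (fun p => p.1.1 * p.2.1) :=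
  (isStrictMorphism_freeMul h).comp ((IsStrictMorphism.val _ u).prodMap (IsStrictMorphism.val _ u'))

theorem placticRel_mul (h : 𝒬.IsSeminormal) {u v u' v' : FreeMonoid Q}
    (huv : placticRel 𝒬 u v) (hu'v' : placticRel 𝒬 u' v') :
    placticRel 𝒬 (u * u') (v * v') := by
  rw [placticRel_iff_componentIso h] at huv hu'v' ⊢
  obtain ⟨ψ, hψ, hψu⟩ := huv
  obtain ⟨ψ', hψ', hψu'⟩ := hu'v'
  have hu := (isStrictMorphism_mul_compQC h u u').componentIso (mul_injective_of_conn h u u')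
    (freeTensorQC_efInverse h) (⟨u, .refl u⟩, ⟨u', .refl u'⟩)
  have hv := ((isStrictMorphism_mul_compQC h v v').comp (hψ.prodMap hψ')).componentIso
    ((mul_injective_of_conn h v v').comp (ψ.injective.prodMap ψ'.injective))
    (freeTensorQC_efInverse h) (⟨u, .refl u⟩, ⟨u', .refl u'⟩)
  simp only [Function.comp_apply, Prod.map_fst, Prod.map_snd, hψu, hψu'] at hv
  exact hu.symm.trans hv

end Plactic

/-- The plactic congruence `≈` on `F^⊗(Q)` is a monoid congruence on
the free monoid `Q*`: it is an equivalence relation, and it is compatible with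
concatenation. -/
theorem placticRel_isCongruence {V : Type*} [NormedAddCommGroup V]
    [InnerProductSpace ℝ V] {ι : Type*} {S : QCSetting V ι} {Q : Type*}
    (𝒬 : QC S Q) (h : 𝒬.IsSeminormal) :
    Equivalence (placticRel 𝒬) ∧
    ∀ u v u' v' : FreeMonoid Q, placticRel 𝒬 u v → placticRel 𝒬 u' v' →
      placticRel 𝒬 (u * u') (v * v') := by
  have hiff := placticRel_iff_componentIso h
  refine ⟨⟨fun u => (hiff u u).2 (.refl _ u), fun huv => ?_, fun huv hvw => ?_⟩,
    fun _ _ _ _ => placticRel_mul h⟩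
  · exact (hiff _ _).2 ((hiff _ _).1 huv).symm
  · exact (hiff _ _).2 (((hiff _ _).1 huv).trans ((hiff _ _).1 hvw))
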